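/- With a₀,…,a₃, g₀,…,g₃ and V as in the tetrahedron setup, for each ordered pair (i,j) with i ≠ j let {k,l} = {0,1,2,3} ∖ {i,j}. Then both of the following identities of linear maps on ℝ³ hold: ∑_{i ≠ j} (−18 V² ‖g_k × g_l‖²) · (gᵢ ⊗ gⱼ) = Id_{ℝ³} and ∑_{i ≠ j} (−18 V² ‖g_k × g_l‖²) · (gⱼ ⊗ gᵢ) = Id_{ℝ³}. (Lemma 4.9: in the paper's notation this is I = ∑_{F ≠ F'} ω_{FF'}^T (|F||F'|/|T|) n_F n_{F'}ᵀ = ∑_{F ≠ F'} ω_{FF'}^T (|F||F'|/|T|) n_{F'} n_Fᵀ, using that the face Fᵢ opposite vertex aᵢ satisfies |Fᵢ|·n_{Fᵢ} = −3V·gᵢ for its outward unit normal n_{Fᵢ} and area |Fᵢ|, and ω_{FᵢFⱼ}^T = −½‖curl φ_{kl}‖²_{L²(T)} = −2V‖g_k × g_l‖² where φ_{kl} is the Nédélec basis function of the common edge of Fᵢ and Fⱼ.) -/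

import Mathlib

/-!
The gradients satisfy `∑ gᵢ = 0` and `∑ gᵢ aᵢᵀ = I`. Writing `dᵢⱼ = ‖aᵢ − aⱼ‖²` and expanding
`dᵢⱼ = ‖aᵢ‖² + ‖aⱼ‖² − 2⟨aᵢ, aⱼ⟩`, the first two terms are killed by `∑ gᵢ = 0`, so
`∑ᵢⱼ (−dᵢⱼ/2) gᵢ gⱼᵀ = (∑ gᵢ aᵢᵀ)(∑ aⱼ gⱼᵀ) = I`; the second identity is its transpose.

The coefficient in the theorem is exactly `−dᵢⱼ/2`: both `g_k × g_l` and the edge `aᵢ − aⱼ` are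
orthogonal to `g_k` and `g_l`, and `⟨gᵢ, aᵢ − aⱼ⟩ = 1`, so `g_k × g_l = ⟨gᵢ, g_k × g_l⟩ (aᵢ − aⱼ)`.
Since `∑ gᵢ = 0`, this triple product is `±det(g₁, g₂, g₃) = ±1 / det(a₁ − a₀, a₂ − a₀, a₃ − a₀)`,
of modulus `1 / (6V)`.
-/

/-- The cross product on `ℝ³`. -/
def cross3 (a b : Fin 3 → ℝ) : Fin 3 → ℝ :=
  ![a 1 * b 2 - a 2 * b 1, a 2 * b 0 - a 0 * b 2, a 0 * b 1 - a 1 * b 0]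

open Matrix Finset

def IsBarycentricGradients {ι n : Type*} [Fintype n] [DecidableEq ι] (a g : ι → n → ℝ) : Prop :=
  ∀ i j k, g i ⬝ᵥ (a j - a k) = (if i = j then 1 else 0) - (if i = k then 1 else 0)

def edgeMatrix {n : ℕ} (a : Fin (n + 1) → Fin n → ℝ) : Matrix (Fin n) (Fin n) ℝ :=
  of fun r c => a r.succ c - a 0 c

def gradMatrix {n : ℕ} (g : Fin (n + 1) → Fin n → ℝ) : Matrix (Fin n) (Fin n) ℝ :=
  of fun r c => g r.succ c

namespace IsBarycentricGradients

variable {n : ℕ} {a g : Fin (n + 1) → Fin n → ℝ}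

theorem gradMatrix_mul_edgeMatrix_transpose (h : IsBarycentricGradients a g) :
    gradMatrix g * (edgeMatrix a)ᵀ = 1 := by
  ext r c
  simpa [mul_apply, edgeMatrix, gradMatrix, one_apply, dotProduct, Fin.succ_ne_zero] using
    h r.succ c.succ 0

theorem edgeMatrix_transpose_mul_gradMatrix (h : IsBarycentricGradients a g) :
    (edgeMatrix a)ᵀ * gradMatrix g = 1 :=
  mul_eq_one_comm.mp h.gradMatrix_mul_edgeMatrix_transpose

theorem det_gradMatrix_mul_det_edgeMatrix (h : IsBarycentricGradients a g) :
    (gradMatrix g).det * (edgeMatrix a).det = 1 := by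
  rw [← det_transpose (edgeMatrix a), ← det_mul, h.gradMatrix_mul_edgeMatrix_transpose, det_one]

theorem sum_eq_zero (h : IsBarycentricGradients a g) : ∑ i, g i = 0 := by
  have hM : edgeMatrix a *ᵥ ∑ i, g i = 0 := by
    ext r
    change (a r.succ - a 0) ⬝ᵥ ∑ i, g i = 0
    rw [dotProduct_comm, sum_dotProduct]
    simp [h _ r.succ 0, sum_sub_distrib]
  calc ∑ i, g i = ((edgeMatrix a)ᵀ * gradMatrix g)ᵀ *ᵥ ∑ i, g i := by
        rw [h.edgeMatrix_transpose_mul_gradMatrix, transpose_one, one_mulVec]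
    _ = 0 := by rw [transpose_mul, transpose_transpose, ← mulVec_mulVec, hM, mulVec_zero]

theorem sum_vecMulVec_eq_one (h : IsBarycentricGradients a g) :
    ∑ i, vecMulVec (g i) (a i) = 1 := by
  have hbase : ∑ i, vecMulVec (g i) (a 0) = 0 := by
    ext p q
    have hp : ∑ i, g i p = 0 := by simpa using congrFun h.sum_eq_zero p
    simp [Matrix.sum_apply, vecMulVec_apply, ← sum_mul, hp]
  calc ∑ i, vecMulVec (g i) (a i) = ∑ i, vecMulVec (g i) (a i - a 0) := by
        simp [vecMulVec_sub, sum_sub_distrib, hbase]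
    _ = (gradMatrix g)ᵀ * edgeMatrix a := by
        ext p q
        simp [Fin.sum_univ_succ (n := n), Matrix.sum_apply, mul_apply, vecMulVec_apply, gradMatrix,
          edgeMatrix]
    _ = 1 := by
        rw [← transpose_transpose (edgeMatrix a), ← transpose_mul,
          h.edgeMatrix_transpose_mul_gradMatrix, transpose_one]

end IsBarycentricGradients

theorem sum_sum_smul_vecMulVec_eq_one {ι n : Type*} [Fintype ι] [Fintype n] [DecidableEq n]
    {a g : ι → n → ℝ} (hg : ∑ i, g i = 0) (hga : ∑ i, vecMulVec (g i) (a i) = 1) :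
    ∑ i, ∑ j, (-((a i - a j) ⬝ᵥ (a i - a j) / 2)) • vecMulVec (g i) (g j) = 1 := by
  have hag : ∑ i, vecMulVec (a i) (g i) = 1 := by
    simpa [transpose_sum] using congrArg transpose hga
  have hcross : ∑ i, ∑ j, (a i ⬝ᵥ a j) • vecMulVec (g i) (g j) = 1 := by
    have := congrArg₂ (· * ·) hga hag
    rw [one_mul, sum_mul_sum] at this
    simpa [vecMulVec_mul_vecMulVec, vecMulVec_smul] using this
  have hleft : ∑ i, ∑ j, (a i ⬝ᵥ a i / 2) • vecMulVec (g i) (g j) = 0 := by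
    have hg_apply : ∀ q, ∑ j, g j q = 0 := fun q => by simpa using congrFun hg q
    ext p q
    simp [Matrix.sum_apply, vecMulVec_apply, ← mul_sum, hg_apply]
  have hright : ∑ i, ∑ j, (a j ⬝ᵥ a j / 2) • vecMulVec (g i) (g j) = 0 := by
    rw [sum_comm]
    simpa [transpose_sum] using congrArg transpose hleft
  calc _ = ∑ i, ∑ j, ((a i ⬝ᵥ a j) • vecMulVec (g i) (g j)
          - (a i ⬝ᵥ a i / 2) • vecMulVec (g i) (g j) - (a j ⬝ᵥ a j / 2) • vecMulVec (g i) (g j)) := by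
        refine sum_congr rfl fun i _ => sum_congr rfl fun j _ => ?_
        rw [← sub_smul, ← sub_smul]
        congr 1
        simp only [dotProduct_sub, sub_dotProduct, dotProduct_comm (a j) (a i)]
        ring
    _ = 1 := by simp only [sum_sub_distrib, hcross, hleft, hright, sub_zero]

theorem triple_product_smul {R : Type*} [CommRing R] (p q r u : Fin 3 → R) :
    (p ⬝ᵥ q ⨯₃ r) • u = (p ⬝ᵥ u) • q ⨯₃ r + (q ⬝ᵥ u) • r ⨯₃ p + (r ⬝ᵥ u) • p ⨯₃ q := by
  ext m
  fin_cases m <;> simp [cross_apply, dotProduct, Fin.sum_univ_three] <;> ring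

theorem cross_eq_triple_product_smul {R : Type*} [CommRing R] {p q r u : Fin 3 → R}
    (hp : p ⬝ᵥ u = 1) (hq : q ⬝ᵥ u = 0) (hr : r ⬝ᵥ u = 0) :
    q ⨯₃ r = (p ⬝ᵥ q ⨯₃ r) • u := by
  simp [triple_product_smul, hp, hq, hr]

theorem triple_product_sq_eq_of_sum_eq_zero {R : Type*} [CommRing R] {g : Fin 4 → Fin 3 → R}
    (h : ∑ i, g i = 0) {i k l : Fin 4} (hik : i ≠ k) (hil : i ≠ l) (hkl : k ≠ l) :
    (g i ⬝ᵥ g k ⨯₃ g l) ^ 2 = (g 1 ⬝ᵥ g 2 ⨯₃ g 3) ^ 2 := by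
  have h0 : g 0 = -(g 1 + g 2 + g 3) := by
    rw [Fin.sum_univ_four] at h
    linear_combination h
  fin_cases i <;> fin_cases k <;> fin_cases l <;>
    simp_all [cross_apply, dotProduct, Fin.sum_univ_three] <;> ring

theorem pairwise_ne_of_insert_eq_univ {α : Type*} [DecidableEq α] [Fintype α]
    (hcard : Fintype.card α = 4) {i j k l : α} (h : ({i, j, k, l} : Finset α) = univ) :
    i ≠ j ∧ i ≠ k ∧ i ≠ l ∧ j ≠ k ∧ j ≠ l ∧ k ≠ l := by
  have h4 : #({i, j, k, l} : Finset α) = 4 := by rw [h, card_univ, hcard]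
  refine ⟨?_, ?_, ?_, ?_, ?_, ?_⟩ <;> rintro rfl <;> simp at h4 <;> grind [card_le_three]

theorem IsBarycentricGradients.sq_det_edgeMatrix_mul_cross_dotProduct_self
    {a g : Fin 4 → Fin 3 → ℝ} (h : IsBarycentricGradients a g) {i j k l : Fin 4}
    (huniv : ({i, j, k, l} : Finset (Fin 4)) = univ) :
    (edgeMatrix a).det ^ 2 * (g k ⨯₃ g l ⬝ᵥ g k ⨯₃ g l) = (a i - a j) ⬝ᵥ (a i - a j) := by
  obtain ⟨hij, hik, hil, hjk, hjl, hkl⟩ := pairwise_ne_of_insert_eq_univ (by simp) huniv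
  have hcross : g k ⨯₃ g l = (g i ⬝ᵥ g k ⨯₃ g l) • (a i - a j) :=
    cross_eq_triple_product_smul (by simp [h i i j, hij]) (by simp [h k i j, hik.symm, hjk.symm])
      (by simp [h l i j, hil.symm, hjl.symm])
  have hdet : (gradMatrix g).det = g 1 ⬝ᵥ g 2 ⨯₃ g 3 := by
    rw [triple_product_eq_det]
    congr 1
    ext r c
    fin_cases r <;> rfl
  have htriple : (g i ⬝ᵥ g k ⨯₃ g l) ^ 2 = (gradMatrix g).det ^ 2 := by
    rw [triple_product_sq_eq_of_sum_eq_zero h.sum_eq_zero hik hil hkl, hdet]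
  rw [hcross, smul_dotProduct, dotProduct_smul, smul_eq_mul, smul_eq_mul]
  linear_combination ((a i - a j) ⬝ᵥ (a i - a j)) *
    ((edgeMatrix a).det ^ 2 * htriple +
      ((gradMatrix g).det * (edgeMatrix a).det + 1) * h.det_gradMatrix_mul_det_edgeMatrix)

theorem stmt_6_general (a : Fin 4 → Fin 3 → ℝ) (g : Fin 4 → Fin 3 → ℝ)
    (hg : ∀ i j k : Fin 4, ∑ m, g i m * (a j m - a k m) =
      (if i = j then (1 : ℝ) else 0) - (if i = k then (1 : ℝ) else 0))
    (V : ℝ)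
    (hV : V = |(Matrix.of fun (r : Fin 3) (c : Fin 3) => a r.succ c - a 0 c).det| / 6)
    (kl : Fin 4 → Fin 4 → Fin 4 × Fin 4)
    (hkl : ∀ i j : Fin 4, i ≠ j →
      ({i, j, (kl i j).1, (kl i j).2} : Finset (Fin 4)) = Finset.univ) :
    (∑ i : Fin 4, ∑ j : Fin 4,
        if i ≠ j then
          (-(18 * V ^ 2 * ∑ m, (cross3 (g (kl i j).1) (g (kl i j).2)) m ^ 2)) •
            Matrix.vecMulVec (g i) (g j)
        else 0) = (1 : Matrix (Fin 3) (Fin 3) ℝ) ∧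
    (∑ i : Fin 4, ∑ j : Fin 4,
        if i ≠ j then
          (-(18 * V ^ 2 * ∑ m, (cross3 (g (kl i j).1) (g (kl i j).2)) m ^ 2)) •
            Matrix.vecMulVec (g j) (g i)
        else 0) = (1 : Matrix (Fin 3) (Fin 3) ℝ) := by
  have hbary : IsBarycentricGradients a g := hg
  have hvol : 36 * V ^ 2 = (edgeMatrix a).det ^ 2 := by
    rw [hV, div_pow, sq_abs, edgeMatrix]
    ring
  have hcoef : ∀ i j, i ≠ j → -(18 * V ^ 2 * ∑ m, (cross3 (g (kl i j).1) (g (kl i j).2)) m ^ 2) =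
      -((a i - a j) ⬝ᵥ (a i - a j) / 2) := by
    intro i j hij
    have hnorm : ∑ m, (cross3 (g (kl i j).1) (g (kl i j).2)) m ^ 2 =
        g (kl i j).1 ⨯₃ g (kl i j).2 ⬝ᵥ g (kl i j).1 ⨯₃ g (kl i j).2 := by
      simp only [dotProduct, sq]
      rfl
    rw [hnorm, ← hbary.sq_det_edgeMatrix_mul_cross_dotProduct_self (hkl i j hij), ← hvol]
    ring
  have hterm : ∀ v : Fin 4 → Fin 4 → Matrix (Fin 3) (Fin 3) ℝ,
      (∑ i, ∑ j, if i ≠ j then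
          (-(18 * V ^ 2 * ∑ m, (cross3 (g (kl i j).1) (g (kl i j).2)) m ^ 2)) • v i j else 0) =
        ∑ i, ∑ j, (-((a i - a j) ⬝ᵥ (a i - a j) / 2)) • v i j := by
    intro v
    refine sum_congr rfl fun i _ => sum_congr rfl fun j _ => ?_
    by_cases hij : i = j
    · simp [hij]
    · rw [if_pos hij, hcoef i j hij]
  have hid := sum_sum_smul_vecMulVec_eq_one hbary.sum_eq_zero hbary.sum_vecMulVec_eq_one
  refine ⟨by rw [hterm]; exact hid, ?_⟩
  rw [hterm, ← transpose_one, ← hid]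
  simp [transpose_sum]

/-- Lemma 4.9: for a nondegenerate tetrahedron with vertices `a 0, …, a 3`,
barycentric gradients `g 0, …, g 3` (characterized by `⟨g i, a j − a k⟩ = δᵢⱼ − δᵢₖ`)
and volume `V = |det(a₁−a₀, a₂−a₀, a₃−a₀)|/6`, for each ordered pair `(i,j)` with
`i ≠ j` let `{k,l}` be the complementary pair (encoded by a function `kl` so that
`{i, j, (kl i j).1, (kl i j).2} = {0,1,2,3}`).  Then
`∑_{i≠j} (−18 V² ‖g_k × g_l‖²) gᵢ gⱼᵀ = I = ∑_{i≠j} (−18 V² ‖g_k × g_l‖²) gⱼ gᵢᵀ`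
as linear maps (matrices) on `ℝ³`, where `v ⊗ w` is realized by the rank-one matrix
`Matrix.vecMulVec v w`, whose action is `x ↦ ⟨w, x⟩ · v`. -/
theorem stmt_6 (a : Fin 4 → Fin 3 → ℝ) (g : Fin 4 → Fin 3 → ℝ)
    (ha : AffineIndependent ℝ a)
    (hg : ∀ i j k : Fin 4, ∑ m, g i m * (a j m - a k m) =
      (if i = j then (1 : ℝ) else 0) - (if i = k then (1 : ℝ) else 0))
    (V : ℝ)
    (hV : V = |(Matrix.of fun (r : Fin 3) (c : Fin 3) => a r.succ c - a 0 c).det| / 6)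
    (kl : Fin 4 → Fin 4 → Fin 4 × Fin 4)
    (hkl : ∀ i j : Fin 4, i ≠ j →
      ({i, j, (kl i j).1, (kl i j).2} : Finset (Fin 4)) = Finset.univ) :
    (∑ i : Fin 4, ∑ j : Fin 4,
        if i ≠ j then
          (-(18 * V ^ 2 * ∑ m, (cross3 (g (kl i j).1) (g (kl i j).2)) m ^ 2)) •
            Matrix.vecMulVec (g i) (g j)
        else 0) = (1 : Matrix (Fin 3) (Fin 3) ℝ) ∧
    (∑ i : Fin 4, ∑ j : Fin 4,
        if i ≠ j then
          (-(18 * V ^ 2 * ∑ m, (cross3 (g (kl i j).1) (g (kl i j).2)) m ^ 2)) •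
            Matrix.vecMulVec (g j) (g i)
        else 0) = (1 : Matrix (Fin 3) (Fin 3) ℝ) :=
  stmt_6_general a g hg V hV kl hkl
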